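/- Let p, z ∈ ℂ with 0 < |p| < 1 and z ≠ 0, set q = p², and let m ∈ ℤ. Assume p^{m} z q^{k} ≠ 1 for every integer k ≥ 0 (so all denominators below are nonzero). Then (q·p^{|m|}·z^{−1}; q)_∞ / (p^{|m|}·z; q)_∞ = (−p^{−1} z)^{(|m|−m)/2} · (q·p^{m}·z^{−1}; q)_∞ / (p^{m}·z; q)_∞, where (|m|−m)/2 is a nonnegative integer and p^{m} denotes the integer power of p (possibly with negative exponent). -/

import Mathlib

/-!
Nothing is to be proved for `m ≥ 0`. For `m = -N < 0`, peel the first `N` factors off the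
Pochhammer symbols at `p^m z` and `q p^m z⁻¹`: the remaining tails are exactly the symbols at
`p^{|m|} z` and `q p^{|m|} z⁻¹`. The two peeled finite products agree up to the prefactor
`(-p⁻¹ z)^N`, because the `j`-th factor `1 - x_j` of the numerator is `-x_j` times the
`(N - 1 - j)`-th factor `1 - x_j⁻¹` of the denominator, and the monomials `-x_j` multiply to
`(-p⁻¹ z)^{-N}`.
-/

/-- The infinite q-Pochhammer symbol `(z; q)_∞ = ∏_{k=0}^∞ (1 - z q^k)`. -/
noncomputable def qPoch (z q : ℂ) : ℂ := ∏' k : ℕ, (1 - z * q ^ k)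

open Finset

lemma multipliable_one_sub_mul_pow (a : ℂ) {q : ℂ} (hq : ‖q‖ < 1) :
    Multipliable fun k : ℕ ↦ 1 - a * q ^ k := by
  simpa [sub_eq_add_neg] using multipliable_one_add_of_summable (f := fun k : ℕ ↦ -(a * q ^ k))
    (by simpa using (summable_geometric_of_lt_one (norm_nonneg q) hq).mul_left ‖a‖)

lemma qPoch_eq_prod_range_mul_qPoch (a : ℂ) {q : ℂ} (hq : ‖q‖ < 1) (n : ℕ) :
    qPoch a q = (∏ j ∈ range n, (1 - a * q ^ j)) * qPoch (a * q ^ n) q := by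
  have hshift : (fun k ↦ 1 - a * q ^ (k + n)) = fun k ↦ 1 - a * q ^ n * q ^ k := by
    ext k
    ring
  have hmul : Multipliable fun k ↦ 1 - a * q ^ (k + n) := by
    rw [hshift]
    exact multipliable_one_sub_mul_pow _ hq
  rw [qPoch, qPoch, ← Multipliable.prod_mul_tprod_nat_mul' (f := fun k ↦ 1 - a * q ^ k) hmul,
    hshift]

lemma prod_range_succ_one_sub_reflect {R : Type*} [CommRing R] {a b q : R} {n : ℕ}
    (hab : a * b * q ^ n = 1) :
    ∏ j ∈ range (n + 1), (1 - b * q ^ j)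
      = (∏ j ∈ range (n + 1), -(b * q ^ j)) * ∏ j ∈ range (n + 1), (1 - a * q ^ j) := by
  rw [← prod_range_reflect (fun j ↦ 1 - a * q ^ j), ← prod_mul_distrib]
  refine prod_congr rfl fun j hj ↦ ?_
  have hpow : q ^ j * q ^ (n + 1 - 1 - j) = q ^ n := by
    rw [← pow_add]
    congr 1
    have := mem_range.mp hj
    omega
  linear_combination -(a * b) * hpow - hab

lemma neg_inv_mul_pow_mul_prod_neg {K : Type*} [Field K] {p : K} (hp : p ≠ 0) {z : K}
    (hz : z ≠ 0) (n : ℕ) :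
    (-p⁻¹ * z) ^ (n + 1) * ∏ j ∈ range (n + 1), -(p ^ 2 * (p ^ (n + 1))⁻¹ * z⁻¹ * (p ^ 2) ^ j)
      = 1 := by
  set c := p ^ 2 * (p ^ (n + 1))⁻¹ * z⁻¹
  have hbase : -p⁻¹ * z * -c = (p ^ n)⁻¹ := by
    simp only [c]
    field_simp
    ring
  simp only [← neg_mul]
  rw [prod_mul_distrib, prod_const, card_range, prod_pow_eq_pow_sum, ← mul_assoc, ← mul_pow,
    hbase, ← pow_mul, mul_comm 2, sum_range_id_mul_two, Nat.add_sub_cancel, inv_pow, ← pow_mul,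
    mul_comm n, inv_mul_cancel₀ (pow_ne_zero _ hp)]

lemma neg_inv_mul_pow_mul_prod_one_sub {K : Type*} [Field K] {p : K} (hp : p ≠ 0) {z : K}
    (hz : z ≠ 0) (n : ℕ) :
    (-p⁻¹ * z) ^ (n + 1) * ∏ j ∈ range (n + 1), (1 - p ^ 2 * (p ^ (n + 1))⁻¹ * z⁻¹ * (p ^ 2) ^ j)
      = ∏ j ∈ range (n + 1), (1 - (p ^ (n + 1))⁻¹ * z * (p ^ 2) ^ j) := by
  have hab : (p ^ (n + 1))⁻¹ * z * (p ^ 2 * (p ^ (n + 1))⁻¹ * z⁻¹) * (p ^ 2) ^ n = 1 := by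
    field_simp
    ring
  rw [prod_range_succ_one_sub_reflect hab, ← mul_assoc, neg_inv_mul_pow_mul_prod_neg hp hz, one_mul]

/-- The Dimofte–Gaiotto–Gukov identity used to eliminate absolute values:
`(q^{1+|m|/2}/z;q)_∞ / (q^{|m|/2} z;q)_∞
  = (−q^{−1/2} z)^{(|m|−m)/2} (q^{1+m/2}/z;q)_∞ / (q^{m/2} z;q)_∞`,
with half-powers of `q` interpreted via a fixed square root `p`, `p² = q`. -/
theorem abs_elimination (p q z : ℂ) (m : ℤ)
    (hp0 : 0 < ‖p‖) (hp1 : ‖p‖ < 1)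
    (hq : q = p ^ 2) (hz : z ≠ 0)
    (hden : ∀ k : ℕ, p ^ m * z * q ^ k ≠ 1) :
    qPoch (q * p ^ |m| * z⁻¹) q / qPoch (p ^ |m| * z) q
      = (-p⁻¹ * z) ^ ((|m| - m) / 2) *
        (qPoch (q * p ^ m * z⁻¹) q / qPoch (p ^ m * z) q) := by
  have hp : p ≠ 0 := norm_pos_iff.mp hp0
  have hq1 : ‖p ^ 2‖ < 1 := by
    rw [norm_pow]
    exact pow_lt_one₀ (norm_nonneg p) hp1 two_ne_zero
  subst hq
  rcases le_or_gt 0 m with hm | hm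
  · simp [abs_of_nonneg hm]
  obtain ⟨n, rfl⟩ : ∃ n : ℕ, m = -((n + 1 : ℕ) : ℤ) := ⟨(-m - 1).toNat, by omega⟩
  have hexp : (|-((n + 1 : ℕ) : ℤ)| - -((n + 1 : ℕ) : ℤ)) / 2 = ((n + 1 : ℕ) : ℤ) := by
    rw [abs_neg, Nat.abs_cast]
    omega
  have hnum : p ^ 2 * p ^ (n + 1) * z⁻¹ = p ^ 2 * (p ^ (n + 1))⁻¹ * z⁻¹ * (p ^ 2) ^ (n + 1) := by
    field_simp
    ring
  have hden' : p ^ (n + 1) * z = (p ^ (n + 1))⁻¹ * z * (p ^ 2) ^ (n + 1) := by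
    field_simp
    ring
  rw [zpow_neg, zpow_natCast] at hden
  have hP : ∏ j ∈ range (n + 1), (1 - (p ^ (n + 1))⁻¹ * z * (p ^ 2) ^ j) ≠ 0 :=
    prod_ne_zero_iff.mpr fun j _ ↦ sub_ne_zero.mpr (hden j).symm
  rw [hexp, abs_neg, Nat.abs_cast, zpow_neg, zpow_natCast, zpow_natCast, hnum, hden',
    qPoch_eq_prod_range_mul_qPoch (p ^ 2 * (p ^ (n + 1))⁻¹ * z⁻¹) hq1 (n + 1),
    qPoch_eq_prod_range_mul_qPoch ((p ^ (n + 1))⁻¹ * z) hq1 (n + 1), ← mul_div_assoc,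
    ← mul_assoc, neg_inv_mul_pow_mul_prod_one_sub hp hz, mul_div_mul_left _ _ hP]
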